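/- In a J-category, let p : E → B and p' : E' → B be morphisms with the same codomain. If p admits a weak lifting along p', then secat(p') ≤ secat(p). -/

import Mathlib

open CategoryTheory CategoryTheory.Limits ZeroObject

universe v u v' u'

variable (C : Type u) [Category.{v} C] [HasZeroObject C] [HasZeroMorphisms C]

/-- A category satisfying axioms (J1)-(J4) of Doeraene's J-categories:
a pointed category with fibrations, cofibrations and weak equivalences. -/
structure PreJCat where
  fib : MorphismProperty C
  cofib : MorphismProperty C
  weq : MorphismProperty C
  /-- (J1) isomorphisms are trivial cofibrations -/
  iso_triv_cofib : ∀ {X Y : C} (f : X ⟶ Y), IsIso f → cofib f ∧ weq f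
  /-- (J1) isomorphisms are trivial fibrations -/
  iso_triv_fib : ∀ {X Y : C} (f : X ⟶ Y), IsIso f → fib f ∧ weq f
  fib_comp : ∀ {X Y Z : C} {f : X ⟶ Y} {g : Y ⟶ Z}, fib f → fib g → fib (f ≫ g)
  cofib_comp : ∀ {X Y Z : C} {f : X ⟶ Y} {g : Y ⟶ Z}, cofib f → cofib g → cofib (f ≫ g)
  /-- (J1) two-out-of-three for weak equivalences -/
  weq_comp : ∀ {X Y Z : C} {f : X ⟶ Y} {g : Y ⟶ Z}, weq f → weq g → weq (f ≫ g)
  weq_of_comp_left : ∀ {X Y Z : C} {f : X ⟶ Y} {g : Y ⟶ Z}, weq g → weq (f ≫ g) → weq f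
  weq_of_comp_right : ∀ {X Y Z : C} {f : X ⟶ Y} {g : Y ⟶ Z}, weq f → weq (f ≫ g) → weq g
  /-- (J2) pullbacks of fibrations exist, and the base extension is a fibration -/
  pb_exists : ∀ {E B B' : C} (p : E ⟶ B) (f : B' ⟶ B), fib p →
    ∃ (P : C) (fb : P ⟶ E) (pb : P ⟶ B'), IsPullback fb pb p f ∧ fib pb
  /-- (J2) base extensions of weak equivalences along fibrations are weak equivalences -/
  pb_weq : ∀ {E B B' P : C} {p : E ⟶ B} {f : B' ⟶ B} {fb : P ⟶ E} {pb : P ⟶ B'},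
    fib p → IsPullback fb pb p f → (weq f → weq fb) ∧ (weq p → weq pb)
  /-- (J2) dual: pushouts of cofibrations exist -/
  po_exists : ∀ {A X Y : C} (i : A ⟶ X) (g : A ⟶ Y), cofib i →
    ∃ (Q : C) (inl : X ⟶ Q) (inr : Y ⟶ Q), IsPushout i g inl inr ∧ cofib inr
  po_weq : ∀ {A X Y Q : C} {i : A ⟶ X} {g : A ⟶ Y} {inl : X ⟶ Q} {inr : Y ⟶ Q},
    cofib i → IsPushout i g inl inr → (weq g → weq inl) ∧ (weq i → weq inr)
  /-- (J3) F-factorizations exist -/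
  F_fac : ∀ {X Y : C} (f : X ⟶ Y), ∃ (Z : C) (τ : X ⟶ Z) (q : Z ⟶ Y),
    weq τ ∧ fib q ∧ τ ≫ q = f
  /-- (J3) C-factorizations exist -/
  C_fac : ∀ {X Y : C} (f : X ⟶ Y), ∃ (Z : C) (i : X ⟶ Z) (σ : Z ⟶ Y),
    cofib i ∧ weq σ ∧ i ≫ σ = f
  /-- (J4) cofibrant replacements exist -/
  cof_replace : ∀ X : C, ∃ (Xb : C) (q : Xb ⟶ X), fib q ∧ weq q ∧
    (∀ {E : C} (p : E ⟶ Xb), fib p → weq p → ∃ s : Xb ⟶ E, s ≫ p = 𝟙 Xb)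

variable {C}

namespace PreJCat

/-- An object is a cofibrant model if every trivial fibration onto it admits a section. -/
def CofModel (P : PreJCat C) (X : C) : Prop :=
  ∀ {E : C} (p : E ⟶ X), P.fib p → P.weq p → ∃ s : X ⟶ E, s ≫ p = 𝟙 X

/-- An object is e-fibrant if the morphism to the zero object is a fibration. -/
def EFibrant (P : PreJCat C) (X : C) : Prop := P.fib (0 : X ⟶ 0)

/-- `f` admits a weak lifting along `g` (all objects being cofibrant models). -/
def WeakLifting (P : PreJCat C) {A B Cc : C} (f : A ⟶ B) (g : Cc ⟶ B) : Prop :=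
  ∃ (E : C) (τ : Cc ⟶ E) (q : E ⟶ B), P.weq τ ∧ P.fib q ∧ τ ≫ q = g ∧
    ∃ s : A ⟶ E, s ≫ q = f

/-- `g` admits a weak section. -/
def HasWeakSection (P : PreJCat C) {E B : C} (g : E ⟶ B) : Prop :=
  P.WeakLifting (𝟙 B) g

/-- `j : J ⟶ B` is a join morphism of `f : A ⟶ B` and `g : Cc ⟶ B`: built from an
F-factorization of `g`, a pullback, a C-factorization and a pushout. -/
def IsJoin (P : PreJCat C) {A Cc B J : C} (f : A ⟶ B) (g : Cc ⟶ B) (j : J ⟶ B) : Prop :=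
  ∃ (E : C) (τ : Cc ⟶ E) (q : E ⟶ B), P.weq τ ∧ P.fib q ∧ τ ≫ q = g ∧
  ∃ (E' Z : C) (fbar : E' ⟶ E) (pbar : E' ⟶ A) (i : E' ⟶ Z) (σ : Z ⟶ E)
    (a : A ⟶ J) (bz : Z ⟶ J),
    IsPullback fbar pbar q f ∧ P.cofib i ∧ P.weq σ ∧ i ≫ σ = fbar ∧
    IsPushout pbar i a bz ∧ a ≫ j = f ∧ bz ≫ j = σ ≫ q

/-- `IsIterJoin P p n h` : `h` is an `n`-th iterated join morphism `*ⁿ_B E ⟶ B` of `p`. -/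
inductive IsIterJoin (P : PreJCat C) {E B : C} (p : E ⟶ B) : ℕ → ∀ {X : C}, (X ⟶ B) → Prop
  | zero : IsIterJoin P p 0 p
  | succ {n : ℕ} {X Y : C} {h : X ⟶ B} {h' : Y ⟶ B} :
      IsIterJoin P p n h → P.IsJoin h p h' → IsIterJoin P p (n + 1) h'

/-- The Ganea-type sectional category of a morphism. -/
noncomputable def Gsecat (P : PreJCat C) {E B : C} (p : E ⟶ B) : ℕ∞ :=
  sInf {n : ℕ∞ | ∃ m : ℕ, n = (m : ℕ∞) ∧
    ∃ (X : C) (h : X ⟶ B), P.IsIterJoin p m h ∧ P.HasWeakSection h}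

end PreJCat

/-- `p1, p2` exhibit `Pd` as a binary product of `X` and `Y`. -/
def IsBinProd {X Y Pd : C} (p1 : Pd ⟶ X) (p2 : Pd ⟶ Y) : Prop :=
  Nonempty (IsLimit (BinaryFan.mk p1 p2))

namespace PreJCat

/-- `IsFatWedge P p n j Δ` : `j : Tⁿ(p) ⟶ B^{n+1}` is an `n`-th fat wedge morphism of `p`
together with the diagonal `Δ : B ⟶ B^{n+1}`. -/
inductive IsFatWedge (P : PreJCat C) {E B : C} (p : E ⟶ B) :
    ℕ → ∀ {T Pw : C}, (T ⟶ Pw) → (B ⟶ Pw) → Prop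
  | zero : IsFatWedge P p 0 p (𝟙 B)
  | succ {n : ℕ} {T Pn : C} {j : T ⟶ Pn} {Δ : B ⟶ Pn}
      (hprev : IsFatWedge P p n j Δ)
      {Pn1 : C} {pr1 : Pn1 ⟶ Pn} {pr2 : Pn1 ⟶ B} (hP : IsBinProd pr1 pr2)
      {TB : C} {q1 : TB ⟶ T} {q2 : TB ⟶ B} (hTB : IsBinProd q1 q2)
      {PE : C} {r1 : PE ⟶ Pn} {r2 : PE ⟶ E} (hPE : IsBinProd r1 r2)
      {jB : TB ⟶ Pn1} (hjB : jB ≫ pr1 = q1 ≫ j ∧ jB ≫ pr2 = q2)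
      {pP : PE ⟶ Pn1} (hpP : pP ≫ pr1 = r1 ∧ pP ≫ pr2 = r2 ≫ p)
      {Tn1 : C} {j' : Tn1 ⟶ Pn1} (hjoin : P.IsJoin jB pP j')
      {Δ' : B ⟶ Pn1} (hΔ : Δ' ≫ pr1 = Δ ∧ Δ' ≫ pr2 = 𝟙 B) :
      IsFatWedge P p (n + 1) j' Δ'

/-- The Whitehead-type sectional category of a morphism with e-fibrant codomain. -/
noncomputable def WsecatE (P : PreJCat C) {E B : C} (p : E ⟶ B) : ℕ∞ :=
  sInf {n : ℕ∞ | ∃ m : ℕ, n = (m : ℕ∞) ∧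
    ∃ (T Pw : C) (j : T ⟶ Pw) (Δ : B ⟶ Pw), P.IsFatWedge p m j Δ ∧ P.WeakLifting Δ j}

/-- The Whitehead-type sectional category of an arbitrary morphism, via e-fibrant
replacements of the codomain. -/
noncomputable def Wsecat (P : PreJCat C) {E B : C} (p : E ⟶ B) : ℕ∞ :=
  ⨅ (F : C) (τ : B ⟶ F) (_ : P.weq τ ∧ P.EFibrant F), P.WsecatE (p ≫ τ)

/-- A commutative square is a homotopy pullback. -/
def IsHPB (P : PreJCat C) {D A Cc B : C} (f' : D ⟶ Cc) (g' : D ⟶ A)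
    (g : Cc ⟶ B) (f : A ⟶ B) : Prop :=
  f' ≫ g = g' ≫ f ∧ ∃ (E : C) (τ : Cc ⟶ E) (q : E ⟶ B), P.weq τ ∧ P.fib q ∧ τ ≫ q = g ∧
    ∃ (Pt : C) (pr1 : Pt ⟶ E) (pr2 : Pt ⟶ A), IsPullback pr1 pr2 q f ∧
      ∃ w : D ⟶ Pt, P.weq w ∧ w ≫ pr1 = f' ≫ τ ∧ w ≫ pr2 = g'

/-- A commutative square is a homotopy pushout. -/
def IsHPO (P : PreJCat C) {A B Cc D : C} (f : A ⟶ B) (g : A ⟶ Cc)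
    (i' : B ⟶ D) (j' : Cc ⟶ D) : Prop :=
  f ≫ i' = g ≫ j' ∧ ∃ (Z : C) (i : A ⟶ Z) (σ : Z ⟶ B), P.cofib i ∧ P.weq σ ∧ i ≫ σ = f ∧
    ∃ (Q : C) (inl : Z ⟶ Q) (inr : Cc ⟶ Q), IsPushout i g inl inr ∧
      ∃ w : Q ⟶ D, P.weq w ∧ inl ≫ w = σ ≫ i' ∧ inr ≫ w = j'

/-- `A-A'-B'-B` is a weak pullback over `b : B ⟶ B'` (all objects cofibrant models). -/
def IsWeakPullback (P : PreJCat C) {A B A' B' : C}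
    (f : A ⟶ B) (f' : A' ⟶ B') (b : B ⟶ B') : Prop :=
  ∃ (X : C) (τ : A' ⟶ X) (q : X ⟶ B'), P.weq τ ∧ P.fib q ∧ τ ≫ q = f' ∧
    ∃ x : A ⟶ X, P.IsHPB x f q b

/-- `g : G ⟶ B` is an `n`-th Ganea map of `B`: the `n`-th iterated join of `0 ⟶ B`. -/
def IsGaneaMap (P : PreJCat C) (B : C) (n : ℕ) {G : C} (g : G ⟶ B) : Prop :=
  P.IsIterJoin (0 : (0 : C) ⟶ B) n g

/-- The Lusternik-Schnirelmann category of an object. -/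
noncomputable def catObj (P : PreJCat C) (B : C) : ℕ∞ :=
  sInf {n : ℕ∞ | ∃ m : ℕ, n = (m : ℕ∞) ∧
    ∃ (G : C) (g : G ⟶ B), P.IsGaneaMap B m g ∧ P.HasWeakSection g}

/-- The Lusternik-Schnirelmann category of a morphism `b : B ⟶ B'`:
least `n` such that `b` admits a weak lifting along the `n`-th Ganea map of `B'`. -/
noncomputable def catMor (P : PreJCat C) {B B' : C} (b : B ⟶ B') : ℕ∞ :=
  sInf {n : ℕ∞ | ∃ m : ℕ, n = (m : ℕ∞) ∧
    ∃ (G : C) (g : G ⟶ B'), P.IsGaneaMap B' m g ∧ P.WeakLifting b g}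

/-- One step of a zigzag: a weak equivalence of morphisms in the arrow category. -/
def MorWeqStep (P : PreJCat C) (u v : Arrow C) : Prop :=
  ∃ h : u ⟶ v, P.weq h.left ∧ P.weq h.right

/-- Two morphisms are weakly equivalent: joined by a finite zigzag of weak
equivalences of morphisms. -/
def WeaklyEquivMor (P : PreJCat C) (u v : Arrow C) : Prop :=
  Relation.EqvGen P.MorWeqStep u v

def ObjWeqStep (P : PreJCat C) (X Y : C) : Prop := ∃ f : X ⟶ Y, P.weq f

/-- Two objects are weakly equivalent: joined by a finite zigzag of weak equivalences. -/
def WeaklyEquivObj (P : PreJCat C) (X Y : C) : Prop :=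
  Relation.EqvGen P.ObjWeqStep X Y

/-- The abstract topological complexity of an e-fibrant object:
the sectional category of the diagonal `B ⟶ B × B`. -/
noncomputable def TCE (P : PreJCat C) (B : C) : ℕ∞ :=
  ⨅ (Pd : C) (p1 : Pd ⟶ B) (p2 : Pd ⟶ B) (_ : IsBinProd p1 p2)
    (Δ : B ⟶ Pd) (_ : Δ ≫ p1 = 𝟙 B ∧ Δ ≫ p2 = 𝟙 B), P.Gsecat Δ

/-- The abstract topological complexity of an arbitrary object, via e-fibrant
replacements. -/
noncomputable def TC (P : PreJCat C) (B : C) : ℕ∞ :=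
  ⨅ (F : C) (τ : B ⟶ F) (_ : P.weq τ ∧ P.EFibrant F), P.TCE F

end PreJCat

variable (C)

/-- A J-category: (J1)-(J4) together with the cube axiom (J5). -/
structure JCat extends PreJCat C where
  /-- (J5) the cube axiom: in a commutative cube whose bottom face is a homotopy
  pushout and whose vertical faces are homotopy pullbacks, the top face is a
  homotopy pushout. -/
  cube : ∀ {X00 X01 X10 X11 Y00 Y01 Y10 Y11 : C}
    {tf : X00 ⟶ X01} {tg : X00 ⟶ X10} {ti : X01 ⟶ X11} {tj : X10 ⟶ X11}
    {bf : Y00 ⟶ Y01} {bg : Y00 ⟶ Y10} {bi : Y01 ⟶ Y11} {bj : Y10 ⟶ Y11}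
    {v00 : X00 ⟶ Y00} {v01 : X01 ⟶ Y01} {v10 : X10 ⟶ Y10} {v11 : X11 ⟶ Y11},
    tf ≫ ti = tg ≫ tj →
    toPreJCat.IsHPO bf bg bi bj →
    toPreJCat.IsHPB tf v00 v01 bf →
    toPreJCat.IsHPB tg v00 v10 bg →
    toPreJCat.IsHPB ti v01 v11 bi →
    toPreJCat.IsHPB tj v10 v11 bj →
    toPreJCat.IsHPO tf tg ti tj

variable {C}

/-- A modelization functor: preserves weak equivalences, homotopy pullbacks and
homotopy pushouts. -/
structure ModelizationFunctor {D : Type u'} [Category.{v'} D] [HasZeroObject D]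
    [HasZeroMorphisms D] (P : PreJCat C) (Q : PreJCat D) where
  F : C ⥤ D
  map_weq : ∀ {X Y : C} (f : X ⟶ Y), P.weq f → Q.weq (F.map f)
  map_hpb : ∀ {Dd A Cc B : C} {f' : Dd ⟶ Cc} {g' : Dd ⟶ A} {g : Cc ⟶ B} {f : A ⟶ B},
    P.IsHPB f' g' g f → Q.IsHPB (F.map f') (F.map g') (F.map g) (F.map f)
  map_hpo : ∀ {A B Cc Dd : C} {f : A ⟶ B} {g : A ⟶ Cc} {i' : B ⟶ Dd} {j' : Cc ⟶ Dd},
    P.IsHPO f g i' j' → Q.IsHPO (F.map f) (F.map g) (F.map i') (F.map j')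

/-!
By induction on `n` it suffices to show: if `h` weakly lifts along `h'` and `p` along `p'`, then a
join of `h` and `p` weakly lifts along a join of `h'` and `p'`. Replace `h'` and `p'` by fibrations
`q₁` and `q₀` and let `k` be the join of `q₁` and `q₀`, built on the pullback of `q₀` and `q₁`.
The weak liftings give a map from the join of `h` and `p` into the source of `k` over `B`. The
join of `h'` and `p'` is built on a span weakly equivalent to the one defining `k`, so by the cube
axiom it is a homotopy pushout for `k`; since all objects are cofibrant models, `k` then weakly
lifts along the join of `h'` and `p'`. Composing with a weak section of the `n`-th join of `p`
gives one of the `n`-th join of `p'`.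
-/

theorem CategoryTheory.IsPushout.exists_comp_eq {𝒞 : Type*} [Category 𝒞] {Z X Y Q T W : 𝒞}
    {f : Z ⟶ X} {g : Z ⟶ Y} {inl : X ⟶ Q} {inr : Y ⟶ Q} (hpo : IsPushout f g inl inr)
    {u : X ⟶ T} {v : Y ⟶ T} (k : T ⟶ W) {j : Q ⟶ W} (huv : f ≫ u = g ≫ v)
    (hu : inl ≫ j = u ≫ k) (hv : inr ≫ j = v ≫ k) : ∃ G : Q ⟶ T, G ≫ k = j :=
  ⟨hpo.desc u v huv, hpo.hom_ext (by simp [hu]) (by simp [hv])⟩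

namespace PreJCat

section

omit [HasZeroObject C] [HasZeroMorphisms C]

variable (P : PreJCat C)

/-- The part of `IsJoin` that follows the choice of the fibration `q` replacing the second map. -/
def IsJoinAlong {A E B J : C} (f : A ⟶ B) (q : E ⟶ B) (j : J ⟶ B) : Prop :=
  ∃ (E' Z : C) (fbar : E' ⟶ E) (pbar : E' ⟶ A) (i : E' ⟶ Z) (σ : Z ⟶ E)
    (a : A ⟶ J) (bz : Z ⟶ J),
    IsPullback fbar pbar q f ∧ P.cofib i ∧ P.weq σ ∧ i ≫ σ = fbar ∧
    IsPushout pbar i a bz ∧ a ≫ j = f ∧ bz ≫ j = σ ≫ q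

theorem exists_isJoinAlong {A E B : C} (f : A ⟶ B) {q : E ⟶ B} (hq : P.fib q) :
    ∃ (J : C) (j : J ⟶ B), P.IsJoinAlong f q j := by
  obtain ⟨E', fbar, pbar, hE', -⟩ := P.pb_exists q f hq
  obtain ⟨Z, i, σ, hi, hσ, hiσ⟩ := P.C_fac fbar
  obtain ⟨J, bz, a, hJ, -⟩ := P.po_exists i pbar hi
  have hw : pbar ≫ f = i ≫ σ ≫ q := by rw [← hE'.w, ← hiσ, Category.assoc]
  exact ⟨J, hJ.flip.desc f (σ ≫ q) hw, E', Z, fbar, pbar, i, σ, a, bz, hE', hi, hσ, hiσ, hJ.flip,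
    hJ.flip.inl_desc _ _ _, hJ.flip.inr_desc _ _ _⟩

theorem weq_id (X : C) : P.weq (𝟙 X) :=
  (P.iso_triv_fib (𝟙 X) inferInstance).2

/-- Pull `q` back along `r`: the lift of `τ` into the pullback, F-factorized, gives a trivial
fibration onto `Y`, and its section exists because `Y` is a cofibrant model. -/
theorem exists_lift_of_weq {A Y E B : C} (hY : P.CofModel Y) {τ : A ⟶ Y} {q : E ⟶ B}
    (r : Y ⟶ B) {m : A ⟶ E} (hτ : P.weq τ) (hq : P.fib q) (hm : m ≫ q = τ ≫ r) :
    ∃ φ : Y ⟶ E, φ ≫ q = r := by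
  obtain ⟨Pt, fb, pb, hpb, hpb_fib⟩ := P.pb_exists q r hq
  obtain ⟨W, τW, qW, hτW, hqW, hfac⟩ := P.F_fac (hpb.lift m τ hm)
  have hcomp : τW ≫ qW ≫ pb = τ := by rw [← Category.assoc, hfac, hpb.lift_snd]
  have hweq : P.weq (qW ≫ pb) := P.weq_of_comp_right hτW (hcomp ▸ hτ)
  obtain ⟨s, hs⟩ := hY (qW ≫ pb) (P.fib_comp hqW hpb_fib) hweq
  refine ⟨s ≫ qW ≫ fb, ?_⟩
  rw [Category.assoc, Category.assoc, hpb.w, ← Category.assoc qW, ← Category.assoc, hs,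
    Category.id_comp]

variable {P}

theorem WeakLifting.trans (hc : ∀ X : C, P.CofModel X) {A Cc D B : C} {f : A ⟶ B}
    {g : Cc ⟶ B} {k : D ⟶ B} (h₁ : P.WeakLifting f g) (h₂ : P.WeakLifting g k) :
    P.WeakLifting f k := by
  obtain ⟨E, τ, q, hτ, hq, rfl, s, rfl⟩ := h₁
  obtain ⟨E', τ', q', hτ', hq', hfac', s', hs'⟩ := h₂
  obtain ⟨φ, hφ⟩ := P.exists_lift_of_weq (hc E) q hτ hq' hs'
  exact ⟨E', τ', q', hτ', hq', hfac', s ≫ φ, by rw [Category.assoc, hφ]⟩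

theorem WeakLifting.precomp {A Cc D B : C} {k : Cc ⟶ B} {j : D ⟶ B}
    (h : P.WeakLifting k j) (G : A ⟶ Cc) : P.WeakLifting (G ≫ k) j := by
  obtain ⟨E, τ, q, hτ, hq, hfac, s, hs⟩ := h
  exact ⟨E, τ, q, hτ, hq, hfac, G ≫ s, by rw [Category.assoc, hs]⟩

variable (P)

theorem weakLifting_of_comp_eq_comp {Q K T B : C} (hK : P.CofModel K) {w : Q ⟶ K}
    (hw : P.weq w) (k : K ⟶ B) {c : Q ⟶ T} {j : T ⟶ B} (hcj : c ≫ j = w ≫ k) :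
    P.WeakLifting k j := by
  obtain ⟨E, τ, q, hτ, hq, rfl⟩ := P.F_fac j
  obtain ⟨φ, hφ⟩ := P.exists_lift_of_weq hK k (m := c ≫ τ) hw hq (by rw [Category.assoc, hcj])
  exact ⟨E, τ, q, hτ, hq, rfl, φ, hφ⟩

theorem weakLifting_of_isHPO {A X Y K T B : C} (hK : P.CofModel K) {f : A ⟶ X} {g : A ⟶ Y}
    {x : X ⟶ K} {y : Y ⟶ K} (hpo : P.IsHPO f g x y) (k : K ⟶ B) {u : X ⟶ T} {v : Y ⟶ T}
    {j : T ⟶ B} (huv : f ≫ u = g ≫ v) (hu : u ≫ j = x ≫ k) (hv : v ≫ j = y ≫ k) :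
    P.WeakLifting k j := by
  obtain ⟨-, Z, i, σ, -, -, rfl, Q, inl, inr, hQ, w, hw, hinl, hinr⟩ := hpo
  obtain ⟨c, hc⟩ := hQ.exists_comp_eq j (u := σ ≫ u) (v := v) (j := w ≫ k)
    (by rw [← huv, Category.assoc])
    (by rw [← Category.assoc, hinl, Category.assoc, Category.assoc, hu])
    (by rw [← Category.assoc, hinr, hv])
  exact P.weakLifting_of_comp_eq_comp hK hw k hc

theorem isHPB_of_weq {D A Cc B : C} {f' : D ⟶ Cc} {g' : D ⟶ A} {g : Cc ⟶ B} {f : A ⟶ B}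
    (hcomm : f' ≫ g = g' ≫ f) (hg' : P.weq g') (hg : P.weq g) : P.IsHPB f' g' g f := by
  obtain ⟨E, τ, q, hτ, hq, hfac⟩ := P.F_fac g
  obtain ⟨Pt, fb, pb, hpb, -⟩ := P.pb_exists q f hq
  have hcomm' : (f' ≫ τ) ≫ q = g' ≫ f := by rw [Category.assoc, hfac, hcomm]
  have hpb_weq : P.weq pb :=
    (P.pb_weq hq hpb).2 (P.weq_of_comp_right hτ (hfac ▸ hg))
  refine ⟨hcomm, E, τ, q, hτ, hq, hfac, Pt, fb, pb, hpb, hpb.lift (f' ≫ τ) g' hcomm',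
    ?_, hpb.lift_fst _ _ _, hpb.lift_snd _ _ _⟩
  exact P.weq_of_comp_left hpb_weq ((hpb.lift_snd _ _ _).symm ▸ hg')

theorem isHPO_of_isPushout {A X Y K : C} {i : A ⟶ X} {g : A ⟶ Y} {inl : X ⟶ K} {inr : Y ⟶ K}
    (hpo : IsPushout i g inl inr) (hi : P.cofib i) : P.IsHPO i g inl inr :=
  ⟨hpo.w, X, i, 𝟙 X, hi, P.weq_id X, Category.comp_id i, K, inl, inr, hpo, 𝟙 K, P.weq_id K,
    by simp, by simp⟩

theorem exists_cFac_under {D Z D₀ Y : C} {i : D ⟶ Z} (hi : P.cofib i) {σ : Z ⟶ Y}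
    {δ : D ⟶ D₀} {f : D₀ ⟶ Y} (hsq : i ≫ σ = δ ≫ f) :
    ∃ (Z₀ : C) (i₀ : D₀ ⟶ Z₀) (σ₀ : Z₀ ⟶ Y) (ζ : Z ⟶ Z₀), P.cofib i₀ ∧ P.weq σ₀ ∧
      i₀ ≫ σ₀ = f ∧ i ≫ ζ = δ ≫ i₀ ∧ ζ ≫ σ₀ = σ := by
  obtain ⟨W, inl, inr, hW, hinr⟩ := P.po_exists i δ hi
  obtain ⟨Z₀, c, σ₀, hc, hσ₀, hfac⟩ := P.C_fac (hW.desc σ f hsq)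
  refine ⟨Z₀, inr ≫ c, σ₀, inl ≫ c, P.cofib_comp hinr hc, hσ₀, ?_, ?_, ?_⟩
  · rw [Category.assoc, hfac, hW.inr_desc]
  · rw [← Category.assoc, hW.w, Category.assoc]
  · rw [Category.assoc, hfac, hW.inl_desc]

theorem exists_cFac_under_pair {D D' Z Z' D₀ Y : C} {i : D ⟶ Z} {i' : D' ⟶ Z'}
    (hi : P.cofib i) (hi' : P.cofib i') {σ : Z ⟶ Y} {σ' : Z' ⟶ Y} {δ : D ⟶ D₀} {δ' : D' ⟶ D₀}
    {f : D₀ ⟶ Y} (hsq : i ≫ σ = δ ≫ f) (hsq' : i' ≫ σ' = δ' ≫ f) :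
    ∃ (Z₀ : C) (i₀ : D₀ ⟶ Z₀) (σ₀ : Z₀ ⟶ Y) (ζ : Z ⟶ Z₀) (ζ' : Z' ⟶ Z₀),
      P.cofib i₀ ∧ P.weq σ₀ ∧ i₀ ≫ σ₀ = f ∧ i ≫ ζ = δ ≫ i₀ ∧ ζ ≫ σ₀ = σ ∧
      i' ≫ ζ' = δ' ≫ i₀ ∧ ζ' ≫ σ₀ = σ' := by
  obtain ⟨Z₁, i₁, σ₁, ζ₁, hi₁, -, rfl, hiζ₁, hζσ₁⟩ := P.exists_cFac_under hi hsq
  obtain ⟨Z₀, c, σ₀, ζ', hc, hσ₀, hcσ₀, hiζ', hζσ'⟩ :=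
    P.exists_cFac_under hi' (f := σ₁) (δ := δ' ≫ i₁) (by rw [hsq', Category.assoc])
  refine ⟨Z₀, i₁ ≫ c, σ₀, ζ₁ ≫ c, ζ', P.cofib_comp hi₁ hc, hσ₀, ?_, ?_, ?_, ?_, hζσ'⟩
  · rw [Category.assoc, hcσ₀]
  · rw [← Category.assoc, hiζ₁, Category.assoc]
  · rw [Category.assoc, hcσ₀, hζσ₁]
  · rw [hiζ', Category.assoc]

end

end PreJCat

namespace JCat

section

omit [HasZeroObject C] [HasZeroMorphisms C]

variable (J : JCat C)

theorem isHPO_of_weq_isPushout {A X Y K A' X' Y' : C} {i : A ⟶ X} {g : A ⟶ Y} {inl : X ⟶ K}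
    {inr : Y ⟶ K} (hpo : IsPushout i g inl inr) (hi : J.cofib i) {f' : A' ⟶ X'} {g' : A' ⟶ Y'}
    {a : A' ⟶ A} {x : X' ⟶ X} {y : Y' ⟶ Y} (ha : J.weq a) (hx : J.weq x) (hy : J.weq y)
    (hf' : f' ≫ x = a ≫ i) (hg' : g' ≫ y = a ≫ g) :
    J.IsHPO f' g' (x ≫ inl) (y ≫ inr) := by
  have htop : f' ≫ x ≫ inl = g' ≫ y ≫ inr := by
    rw [← Category.assoc, hf', Category.assoc, hpo.w, ← Category.assoc, ← hg', Category.assoc]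
  exact J.cube htop (J.isHPO_of_isPushout hpo hi) (J.isHPB_of_weq hf' ha hx)
    (J.isHPB_of_weq hg' ha hy) (J.isHPB_of_weq (Category.comp_id _) hx (J.weq_id K))
    (J.isHPB_of_weq (Category.comp_id _) hy (J.weq_id K))

theorem exists_isJoin_weakLifting_of_isJoin (hc : ∀ X : C, J.CofModel X)
    {E E' B X X' Y : C} {p : E ⟶ B} {p' : E' ⟶ B} {h : X ⟶ B} {h' : X' ⟶ B} {j : Y ⟶ B}
    (hpp' : J.WeakLifting p p') (hhh' : J.WeakLifting h h') (hj : J.IsJoin h p j) :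
    ∃ (Y' : C) (j' : Y' ⟶ B), J.IsJoin h' p' j' ∧ J.WeakLifting j j' := by
  obtain ⟨E₀, τ₀, q₀, hτ₀, hq₀, rfl, s₀, rfl⟩ := hpp'
  obtain ⟨E₁, τ₁, q₁, hτ₁, -, rfl, s₁, rfl⟩ := hhh'
  obtain ⟨Ep, τp, qp, hτp, -, hfacp, D, Z, fbar, pbar, i, σ, a, bz, hD, hi, -, hiσ, hY,
    haj, hbzj⟩ := hj
  obtain ⟨Y', j', hj'⟩ := J.exists_isJoinAlong (τ₁ ≫ q₁) hq₀
  have ⟨D', Z', fbar', pbar', i', σ', a', bz', hD', hi', hσ', hiσ', hY', haj', hbzj'⟩ := hj'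
  obtain ⟨ψ, hψ⟩ := J.exists_lift_of_weq (hc Ep) qp hτp hq₀ hfacp.symm
  obtain ⟨DK, fK, pK, hDK, hpK⟩ := J.pb_exists q₀ q₁ hq₀
  let δ : D ⟶ DK := hDK.lift (fbar ≫ ψ) (pbar ≫ s₁) (by simp [hψ, hD.w])
  let δ' : D' ⟶ DK := hDK.lift fbar' (pbar' ≫ τ₁) (by simp [hD'.w])
  have hδ : δ ≫ pK = pbar ≫ s₁ := hDK.lift_snd _ _ _
  have hδ' : J.weq δ' := by
    have hpb : IsPullback δ' pbar' pK τ₁ :=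
      IsPullback.of_right (by simpa [δ'] using hD') (hDK.lift_snd _ _ _) hDK
    exact (J.pb_weq hpK hpb).1 hτ₁
  -- `k` is the join of `q₁` and `q₀`, on a C-factorization chosen to receive both `Z` and `Z'`
  obtain ⟨ZK, iK, σK, ζ, ζ', hiK, hσK, hiσK, hiζ, hζσ, hiζ', hζσ'⟩ :=
    J.exists_cFac_under_pair hi hi' (σ := σ ≫ ψ) (σ' := σ') (δ := δ) (δ' := δ') (f := fK)
      (by simp [δ, ← hiσ]) (by simp [δ', hiσ'])
  obtain ⟨K, bK, aK, hK, -⟩ := J.po_exists iK pK hiK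
  let k : K ⟶ B := hK.desc (σK ≫ q₀) q₁ (by rw [← Category.assoc, hiσK, hDK.w])
  have hbKk : bK ≫ k = σK ≫ q₀ := hK.inl_desc _ _ _
  have haKk : aK ≫ k = q₁ := hK.inr_desc _ _ _
  have hζ' : J.weq ζ' := J.weq_of_comp_left hσK (hζσ' ▸ hσ')
  obtain ⟨G, rfl⟩ := hY.exists_comp_eq k (u := s₁ ≫ aK) (v := ζ ≫ bK)
    (by rw [← Category.assoc, ← hδ, Category.assoc, ← hK.w,
      ← Category.assoc, ← hiζ, Category.assoc])
    (by rw [haj, Category.assoc, haKk])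
    (by rw [hbzj, Category.assoc, hbKk, ← Category.assoc, hζσ, Category.assoc, hψ])
  have hkj' : J.WeakLifting k j' :=
    J.weakLifting_of_isHPO (hc K)
      (J.isHPO_of_weq_isPushout hK hiK hδ' hζ' hτ₁ hiζ' (hDK.lift_snd _ _ _).symm) k
      hY'.w.symm (by rw [hbzj', Category.assoc, hbKk, ← Category.assoc, hζσ'])
      (by rw [haj', Category.assoc, haKk])
  exact ⟨Y', j', ⟨E₀, τ₀, q₀, hτ₀, hq₀, rfl, hj'⟩, hkj'.precomp G⟩

theorem exists_isIterJoin_weakLifting (hc : ∀ X : C, J.CofModel X) {E E' B : C}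
    {p : E ⟶ B} {p' : E' ⟶ B} (hpp' : J.WeakLifting p p') {n : ℕ} {X : C} {h : X ⟶ B}
    (hn : J.IsIterJoin p n h) :
    ∃ (X' : C) (h' : X' ⟶ B), J.IsIterJoin p' n h' ∧ J.WeakLifting h h' := by
  induction hn with
  | zero => exact ⟨E', p', .zero, hpp'⟩
  | succ _ hjoin ih =>
    obtain ⟨X', h', hn', hhh'⟩ := ih
    obtain ⟨Y', j', hj', hjj'⟩ := J.exists_isJoin_weakLifting_of_isJoin hc hpp' hhh' hjoin
    exact ⟨Y', j', .succ hn' hj', hjj'⟩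

end

end JCat

/-- In a J-category, if `p` admits a weak lifting along `p'`
(same codomain), then `secat p' ≤ secat p`. -/
theorem Gsecat_le_of_weakLifting (J : JCat C)
    (hc : ∀ X : C, J.toPreJCat.CofModel X)
    {E E' B : C} (p : E ⟶ B) (p' : E' ⟶ B)
    (h : J.toPreJCat.WeakLifting p p') :
    J.toPreJCat.Gsecat p' ≤ J.toPreJCat.Gsecat p := by
  apply sInf_le_sInf
  rintro n ⟨m, rfl, X, hX, hn, hsec⟩
  obtain ⟨X', h', hn', hhh'⟩ := J.exists_isIterJoin_weakLifting hc h hn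
  exact ⟨m, rfl, X', h', hn', hsec.trans hc hhh'⟩
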